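/- Let k ≥ 4 and m, n ≥ k, and let A be a k12⋯(k−1)-avoiding m×n (0,1)-matrix with A(1,n) = 1. Then the number of 1's of A is at most (k−1)(m + n − (k−1)). -/

import Mathlib

/-- Number of 1's of an `m × n` (0,1)-matrix `A` (1-indexed entries). -/
def onesCount (m n : ℕ) (A : ℕ → ℕ → Bool) : ℕ :=
  (((Finset.Icc 1 m) ×ˢ (Finset.Icc 1 n)).filter fun p => A p.1 p.2 = true).card

/-- `A` is `k12⋯(k-1)`-avoiding: there are no strictly increasing rows
`r 0 < ⋯ < r (k-1)` and columns `c 0 < ⋯ < c (k-1)` in the array with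
`A (r 0) (c (k-1)) = 1` and `A (r (t+1)) (c t) = 1` for `t = 0, …, k-2`. -/
def AvoidK1 (m n k : ℕ) (A : ℕ → ℕ → Bool) : Prop :=
  ¬ ∃ r c : ℕ → ℕ,
    (∀ t, t + 1 < k → r t < r (t + 1) ∧ c t < c (t + 1)) ∧
    (∀ t, t < k → 1 ≤ r t ∧ r t ≤ m ∧ 1 ≤ c t ∧ c t ≤ n) ∧
    A (r 0) (c (k - 1)) = true ∧
    (∀ t, t + 1 < k → A (r (t + 1)) (c t) = true)

/-!
Let `P` be the 1's of `A` off the first row and the last column. The entry `A 1 n = 1` lies above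
and to the right of all of them, so a chain of `k - 1` points of `P` increasing strictly in both
coordinates would complete the forbidden pattern: chains in `P` have at most `k - 2` points. By
Mirsky's argument `P` is the union of the level sets of the height function, and the points of
height `t` form an antichain in the box `[t + 1, m] × [t, n - 1]`, so they lie on distinct
diagonals `i - j`: at most `m + n - 1 - 2t` of them. Together with the `m + n - 1` cells of the
first row and last column, summing over `t = 0, …, k - 2` gives `(k - 1)(m + n - (k - 1))`.
-/

open Finset

namespace PatternAvoidance

def chainHeight (P : Finset (ℕ × ℕ)) (p : ℕ × ℕ) : ℕ :=
  ((P.filter fun q => q.1 < p.1 ∧ q.2 < p.2).attach.sup fun q => chainHeight P q.1) + 1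
termination_by p.1
decreasing_by exact (mem_filter.mp q.2).2.1

section chainHeight

variable {P : Finset (ℕ × ℕ)} {p q : ℕ × ℕ}

lemma chainHeight_pos : 0 < chainHeight P p := by
  rw [chainHeight]; omega

lemma chainHeight_lt_chainHeight (hq : q ∈ P) (h₁ : q.1 < p.1) (h₂ : q.2 < p.2) :
    chainHeight P q < chainHeight P p := by
  rw [chainHeight.eq_1 P p]
  exact Nat.lt_succ_of_le <| le_sup (f := fun r => chainHeight P r.1)
    (mem_attach (P.filter fun q => q.1 < p.1 ∧ q.2 < p.2) ⟨q, mem_filter.2 ⟨hq, h₁, h₂⟩⟩)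

lemma exists_chainHeight_add_one_eq (hp : 2 ≤ chainHeight P p) :
    ∃ q ∈ P, q.1 < p.1 ∧ q.2 < p.2 ∧ chainHeight P q + 1 = chainHeight P p := by
  rw [chainHeight] at hp ⊢
  have hne : (P.filter fun q => q.1 < p.1 ∧ q.2 < p.2).attach.Nonempty := by
    rw [nonempty_iff_ne_empty]
    intro h
    simp [h] at hp
  obtain ⟨⟨q, hq⟩, -, hsup⟩ := exists_mem_eq_sup _ hne fun q => chainHeight P q.1
  obtain ⟨hqP, h₁, h₂⟩ := mem_filter.1 hq
  exact ⟨q, hqP, h₁, h₂, by rw [hsup]⟩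

lemma exists_chain_of_chainHeight_eq {L : ℕ} (hp : p ∈ P) (hL : chainHeight P p = L + 1) :
    ∃ f : ℕ → ℕ × ℕ, f L = p ∧ (∀ s ≤ L, f s ∈ P) ∧
      ∀ s < L, (f s).1 < (f (s + 1)).1 ∧ (f s).2 < (f (s + 1)).2 := by
  induction L generalizing p with
  | zero => exact ⟨fun _ => p, rfl, fun _ _ => hp, fun _ hs => absurd hs (Nat.not_lt_zero _)⟩
  | succ L ih =>
    obtain ⟨q, hqP, h₁, h₂, hq⟩ := exists_chainHeight_add_one_eq (P := P) (p := p) (by omega)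
    obtain ⟨g, hgL, hgP, hg⟩ := ih hqP (by omega)
    refine ⟨Function.update g (L + 1) p, by simp, fun s hs => ?_, fun s hs => ?_⟩
    · rcases eq_or_ne s (L + 1) with rfl | hne
      · simpa using hp
      · simpa [hne] using hgP s (by omega)
    · rcases eq_or_ne s L with rfl | hne
      · simpa [hgL] using ⟨h₁, h₂⟩
      · simpa [hne, show s ≠ L + 1 by omega] using hg s (by omega)

end chainHeight

lemma add_le_of_lt_succ {g : ℕ → ℕ} {L : ℕ} (hg : ∀ s < L, g s < g (s + 1)) :
    ∀ s ≤ L, g 0 + s ≤ g s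
  | 0, _ => le_rfl
  | s + 1, hs => by have := add_le_of_lt_succ hg s (by omega); have := hg s (by omega); omega

lemma add_chainHeight_sub_one_le {a b : ℕ} {P : Finset (ℕ × ℕ)} {p : ℕ × ℕ}
    (hbox : ∀ q ∈ P, a ≤ q.1 ∧ b ≤ q.2) (hp : p ∈ P) :
    a + (chainHeight P p - 1) ≤ p.1 ∧ b + (chainHeight P p - 1) ≤ p.2 := by
  obtain ⟨L, hL⟩ : ∃ L, chainHeight P p = L + 1 := ⟨chainHeight P p - 1, by
    have := chainHeight_pos (P := P) (p := p); omega⟩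
  obtain ⟨f, rfl, hfP, hf⟩ := exists_chain_of_chainHeight_eq hp hL
  have h₁ := add_le_of_lt_succ (g := fun s => (f s).1) (fun s hs => (hf s hs).1) L le_rfl
  have h₂ := add_le_of_lt_succ (g := fun s => (f s).2) (fun s hs => (hf s hs).2) L le_rfl
  have h₀ := hbox (f 0) (hfP 0 (Nat.zero_le _))
  omega

lemma card_le_of_antichain_box {S : Finset (ℕ × ℕ)} {a a' b b' : ℕ}
    (hbox : ∀ p ∈ S, a ≤ p.1 ∧ p.1 ≤ a' ∧ b ≤ p.2 ∧ p.2 ≤ b')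
    (hanti : ∀ p ∈ S, ∀ q ∈ S, ¬ (p.1 < q.1 ∧ p.2 < q.2)) :
    S.card ≤ (a' - a) + (b' - b) + 1 := by
  have hinj : S.card ≤ (Icc ((a : ℤ) - b') (a' - b)).card := by
    refine card_le_card_of_injOn (fun p => (p.1 : ℤ) - p.2) (fun p hp => ?_) fun p hp q hq hpq => ?_
    · have := hbox p hp
      simp only [coe_Icc, Set.mem_Icc]
      omega
    · have := hanti p hp q hq
      have := hanti q hq p hp
      simp only at hpq
      exact Prod.ext (by omega) (by omega)
  rw [Int.card_Icc] at hinj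
  omega

lemma card_le_sum_of_chainHeight_le {P : Finset (ℕ × ℕ)} {a a' b b' H : ℕ}
    (hbox : ∀ p ∈ P, a ≤ p.1 ∧ p.1 ≤ a' ∧ b ≤ p.2 ∧ p.2 ≤ b')
    (hH : ∀ p ∈ P, chainHeight P p ≤ H) :
    P.card ≤ ∑ t ∈ range H, ((a' - (a + t)) + (b' - (b + t)) + 1) := by
  have hmaps : ∀ p ∈ P, chainHeight P p - 1 ∈ range H := fun p hp => by
    have := hH p hp
    have := chainHeight_pos (P := P) (p := p)
    rw [mem_range]; omega
  rw [card_eq_sum_card_fiberwise hmaps]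
  refine sum_le_sum fun t _ => card_le_of_antichain_box (fun p hp => ?_) fun p hp q hq h => ?_
  · obtain ⟨hpP, rfl⟩ := mem_filter.1 hp
    have := hbox p hpP
    have := add_chainHeight_sub_one_le (fun q hq => ⟨(hbox q hq).1, (hbox q hq).2.2.1⟩) hpP
    omega
  · obtain ⟨hpP, hpt⟩ := mem_filter.1 hp
    obtain ⟨hqP, hqt⟩ := mem_filter.1 hq
    have := chainHeight_lt_chainHeight hpP h.1 h.2
    have := chainHeight_pos (P := P) (p := p)
    omega

lemma sum_range_sub_two_mul {N L : ℕ} (h : 2 * L ≤ N + 2) :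
    ∑ t ∈ range L, (N - 2 * t) = L * (N + 1 - L) := by
  induction L with
  | zero => simp
  | succ L ih =>
    rw [sum_range_succ, ih (by omega)]
    obtain ⟨d, rfl⟩ : ∃ d, N = 2 * L + d := ⟨N - 2 * L, by omega⟩
    rw [show 2 * L + d + 1 - L = L + d + 1 by omega, show 2 * L + d - 2 * L = d by omega,
      show 2 * L + d + 1 - (L + 1) = L + d by omega]
    ring

def lowerLeftOnes (m n : ℕ) (A : ℕ → ℕ → Bool) : Finset (ℕ × ℕ) :=
  ((Icc 2 m) ×ˢ (Icc 1 (n - 1))).filter fun p => A p.1 p.2 = true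

lemma mem_lowerLeftOnes {m n : ℕ} {A : ℕ → ℕ → Bool} {p : ℕ × ℕ} :
    p ∈ lowerLeftOnes m n A ↔
      (2 ≤ p.1 ∧ p.1 ≤ m) ∧ (1 ≤ p.2 ∧ p.2 ≤ n - 1) ∧ A p.1 p.2 = true := by
  simp [lowerLeftOnes, and_assoc]

lemma onesCount_le_add_card_lowerLeftOnes (m n : ℕ) (A : ℕ → ℕ → Bool) :
    onesCount m n A ≤ n + (m - 1) + (lowerLeftOnes m n A).card := by
  have hsub : (Icc 1 m ×ˢ Icc 1 n).filter (fun p => A p.1 p.2 = true) ⊆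
      ({1} ×ˢ Icc 1 n ∪ Icc 2 m ×ˢ {n}) ∪ lowerLeftOnes m n A := by
    intro p hp
    simp only [mem_filter, mem_product, mem_Icc] at hp
    simp only [mem_union, mem_product, mem_Icc, mem_singleton, mem_lowerLeftOnes, hp.2, and_true]
    omega
  calc onesCount m n A ≤ _ := card_le_card hsub
    _ ≤ _ := (card_union_le _ _).trans (Nat.add_le_add_right (card_union_le _ _) _)
    _ = n + (m - 1) + (lowerLeftOnes m n A).card := by simp

lemma not_avoidK1_of_chain {m n k : ℕ} {A : ℕ → ℕ → Bool} (hk : 2 ≤ k) (h1n : A 1 n = true)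
    {f : ℕ → ℕ × ℕ} (hf : ∀ s ≤ k - 2, f s ∈ lowerLeftOnes m n A)
    (hmono : ∀ s < k - 2, (f s).1 < (f (s + 1)).1 ∧ (f s).2 < (f (s + 1)).2) :
    ¬ AvoidK1 m n k A := by
  simp only [mem_lowerLeftOnes] at hf
  refine not_not.2 ⟨fun | 0 => 1 | t + 1 => (f t).1, fun t => if t = k - 1 then n else (f t).2,
    fun t ht => ⟨?_, ?_⟩, fun t ht => ?_, by simpa, fun t ht => ?_⟩
  · rcases t with _ | t
    · exact (hf 0 (Nat.zero_le _)).1.1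
    · exact (hmono t (by omega)).1
  · have := hf t (by omega)
    have := hmono t
    dsimp only
    split_ifs <;> omega
  · have := hf 0 (Nat.zero_le _)
    have := hf t
    rcases t with _ | t
    · dsimp only; split_ifs <;> omega
    · have := hf t (by omega); dsimp only; split_ifs <;> omega
  · simpa [show t ≠ k - 1 by omega] using (hf t (by omega)).2.2

lemma chainHeight_lowerLeftOnes_le {m n k : ℕ} {A : ℕ → ℕ → Bool} (hk : 2 ≤ k)
    (hA : AvoidK1 m n k A) (h1n : A 1 n = true) {p : ℕ × ℕ} (hp : p ∈ lowerLeftOnes m n A) :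
    chainHeight (lowerLeftOnes m n A) p ≤ k - 2 := by
  by_contra! h
  obtain ⟨f, -, hfP, hf⟩ :=
    exists_chain_of_chainHeight_eq (L := chainHeight (lowerLeftOnes m n A) p - 1) hp (by omega)
  exact not_avoidK1_of_chain hk h1n (fun s hs => hfP s (by omega)) (fun s hs => hf s (by omega)) hA

end PatternAvoidance

open PatternAvoidance in
theorem stmt_18 (m n k : ℕ) (hk : 4 ≤ k) (hm : k ≤ m) (hn : k ≤ n)
    (A : ℕ → ℕ → Bool) (hA : AvoidK1 m n k A) (h1n : A 1 n = true) :
    onesCount m n A ≤ (k - 1) * (m + n - (k - 1)) := by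
  have hcard := card_le_sum_of_chainHeight_le (a := 2) (a' := m) (b := 1) (b' := n - 1)
    (fun p hp => by have := mem_lowerLeftOnes.1 hp; omega)
    fun p hp => chainHeight_lowerLeftOnes_le (by omega) hA h1n hp
  -- The first row and last column together count as the level `t = 0`.
  calc onesCount m n A ≤ n + (m - 1) + (lowerLeftOnes m n A).card :=
        onesCount_le_add_card_lowerLeftOnes m n A
    _ ≤ (m + n - 1 - 2 * 0) + ∑ t ∈ range (k - 2), (m + n - 1 - 2 * (t + 1)) := by
        refine Nat.add_le_add (by omega) (hcard.trans_eq (sum_congr rfl fun t ht => ?_))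
        rw [mem_range] at ht
        omega
    _ = ∑ t ∈ range (k - 1), (m + n - 1 - 2 * t) := by
        rw [show k - 1 = k - 2 + 1 by omega, sum_range_succ', add_comm]
    _ = (k - 1) * (m + n - (k - 1)) := by
        rw [sum_range_sub_two_mul (by omega), show m + n - 1 + 1 = m + n by omega]
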